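/- arXiv:cs/0101010 — 2 statements merged into one kernel-verified Lean document; each statement's English description precedes it below -/
import Mathlib

section
/- Let T be a rooted tree with root r and weight function w satisfying w(u) ≥ ∑_{v child of u} w(v), with all weights positive. Let B be any set of nodes of T, let δ = min_{u ∈ B} w(u), and for each u ∈ B let L(u) be the set of children of u with weight less than δ. Then ∑_{u ∈ B} ∑_{x ∈ L(u)} w(x) ≤ w(r). -/
open Finset

/-- A finite rooted tree on vertex set `V`, given by its root and parent function. -/
structure RTree (V : Type*) where
  root : V
  parent : V → V
  parent_root : parent root = root
  reaches_root : ∀ v, ∃ n, parent^[n] v = root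

variable {V : Type*} [Fintype V] [DecidableEq V]

open scoped Classical in
/-- The set of children of `u`. -/
noncomputable def RTree.children (T : RTree V) (u : V) : Finset V :=
  Finset.univ.filter fun v => T.parent v = u ∧ v ≠ u

open scoped Classical in
/-- The subtree rooted at `u`: all descendants of `u` (including `u`). -/
noncomputable def RTree.subtree (T : RTree V) (u : V) : Finset V :=
  Finset.univ.filter fun v => ∃ n, T.parent^[n] v = u

open scoped Classical in
lemma RTree.mem_children {T : RTree V} {u v : V} :
    v ∈ T.children u ↔ T.parent v = u ∧ v ≠ u := by
  simp [RTree.children]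

open scoped Classical in
lemma RTree.mem_subtree {T : RTree V} {u v : V} :
    v ∈ T.subtree u ↔ ∃ n, T.parent^[n] v = u := by
  simp [RTree.subtree]

lemma RTree.self_mem_subtree (T : RTree V) (u : V) : u ∈ T.subtree u :=
  RTree.mem_subtree.mpr ⟨0, rfl⟩

lemma RTree.iterate_root (T : RTree V) (n : ℕ) : T.parent^[n] T.root = T.root :=
  Function.iterate_fixed T.parent_root n

lemma RTree.eq_root_of_cycle (T : RTree V) {v : V} {k : ℕ} (hk : k ≠ 0)
    (h : T.parent^[k] v = v) : v = T.root := by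
  obtain ⟨m, hm⟩ := T.reaches_root v
  have hcyc : ∀ a, T.parent^[a * k] v = v := by
    intro a
    induction a with
    | zero => simp
    | succ a ih =>
        rw [Nat.succ_mul, Function.iterate_add_apply, h]  -- may need fixing
        exact ih
  have hle : m ≤ (m + 1) * k := by nlinarith [Nat.one_le_iff_ne_zero.mpr hk]
  calc v = T.parent^[(m + 1) * k] v := (hcyc _).symm
    _ = T.parent^[(m + 1) * k - m] (T.parent^[m] v) := by
        rw [← Function.iterate_add_apply, Nat.sub_add_cancel hle]
    _ = T.root := by rw [hm, T.iterate_root]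

lemma RTree.subtree_subset {T : RTree V} {c v : V} (h : c ∈ T.subtree v) :
    T.subtree c ⊆ T.subtree v := by
  obtain ⟨k, hk⟩ := RTree.mem_subtree.mp h
  intro x hx
  obtain ⟨n, hn⟩ := RTree.mem_subtree.mp hx
  exact RTree.mem_subtree.mpr ⟨k + n, by rw [Function.iterate_add_apply, hn, hk]⟩

lemma RTree.card_subtree_lt {T : RTree V} {c v : V} (h : c ∈ T.children v) :
    (T.subtree c).card < (T.subtree v).card := by
  obtain ⟨hpc, hne⟩ := RTree.mem_children.mp h
  have hcv : c ∈ T.subtree v := RTree.mem_subtree.mpr ⟨1, by simpa using hpc⟩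
  refine Finset.card_lt_card ⟨RTree.subtree_subset hcv, fun hsub => ?_⟩
  have hv : v ∈ T.subtree c := hsub (T.self_mem_subtree v)
  obtain ⟨m, hm⟩ := RTree.mem_subtree.mp hv
  have hcyc : T.parent^[m + 1] v = v := by
    rw [Function.iterate_succ_apply', hm, hpc]
  have hvroot : v = T.root := T.eq_root_of_cycle (Nat.succ_ne_zero m) hcyc
  exact hne (by rw [hvroot] at hm ⊢; rw [← hm, T.iterate_root])

lemma RTree.w_le_parent (T : RTree V) (w : V → ℝ) (hpos : ∀ v, 0 < w v)
    (hsup : ∀ u, ∑ v ∈ T.children u, w v ≤ w u) (v : V) :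
    w v ≤ w (T.parent v) := by
  by_cases hv : v = T.parent v
  · rw [← hv]
  · have hmem : v ∈ T.children (T.parent v) := RTree.mem_children.mpr ⟨rfl, hv⟩
    calc w v ≤ ∑ x ∈ T.children (T.parent v), w x :=
          Finset.single_le_sum (fun x _ => (hpos x).le) hmem
      _ ≤ w (T.parent v) := hsup _

lemma RTree.w_le_iterate (T : RTree V) (w : V → ℝ) (hpos : ∀ v, 0 < w v)
    (hsup : ∀ u, ∑ v ∈ T.children u, w v ≤ w u) (v : V) (n : ℕ) :
    w v ≤ w (T.parent^[n] v) := by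
  induction n with
  | zero => simp
  | succ n ih =>
      rw [Function.iterate_succ_apply']
      exact ih.trans (T.w_le_parent w hpos hsup _)

open scoped Classical in
lemma RTree.antichain_sum (T : RTree V) (w : V → ℝ) (hpos : ∀ v, 0 < w v)
    (hsup : ∀ u, ∑ v ∈ T.children u, w v ≤ w u) :
    ∀ (N : ℕ) (v : V) (S : Finset V), (T.subtree v).card ≤ N → S ⊆ T.subtree v →
      (∀ a ∈ S, ∀ b ∈ S, a ≠ b → a ∉ T.subtree b) → ∑ s ∈ S, w s ≤ w v := by
  intro N
  induction N with
  | zero =>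
      intro v S hcard _ _
      exact absurd (Finset.card_pos.mpr ⟨v, T.self_mem_subtree v⟩) (by omega)
  | succ N ih =>
      intro v S hcard hsub hanti
      by_cases hvS : v ∈ S
      · have hS : S = {v} := by
          apply Finset.eq_singleton_iff_unique_mem.mpr
          refine ⟨hvS, fun s hs => ?_⟩
          by_contra hne
          exact hanti s hs v hvS hne (hsub hs)
        rw [hS, Finset.sum_singleton]
      · -- map each s ∈ S to the child of v whose subtree contains s
        set f : V → V := fun s =>
          if h : ∃ n, T.parent^[n] s = v then T.parent^[Nat.find h - 1] s else s with hf
        have hkey : ∀ s ∈ S, f s ∈ T.children v ∧ s ∈ T.subtree (f s) := by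
          intro s hs
          have hs' : ∃ n, T.parent^[n] s = v := RTree.mem_subtree.mp (hsub hs)
          have hsv : s ≠ v := fun h => hvS (h ▸ hs)
          have hn0 : Nat.find hs' ≠ 0 := by
            intro h0
            exact hsv (by simpa [h0] using Nat.find_spec hs')
          have hfs : f s = T.parent^[Nat.find hs' - 1] s := by
            rw [hf]; simp [hs']
          constructor
          · refine RTree.mem_children.mpr ⟨?_, ?_⟩
            · rw [hfs]
              calc T.parent (T.parent^[Nat.find hs' - 1] s)
                  = T.parent^[Nat.find hs' - 1 + 1] s :=
                    (Function.iterate_succ_apply' _ _ _).symm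
                _ = v := by
                    rw [Nat.sub_add_cancel (Nat.one_le_iff_ne_zero.mpr hn0)]
                    exact Nat.find_spec hs'
            · rw [hfs]
              intro hc
              exact Nat.find_min hs' (Nat.sub_lt (Nat.pos_of_ne_zero hn0) one_pos) hc
          · rw [hfs]
            exact RTree.mem_subtree.mpr ⟨Nat.find hs' - 1, rfl⟩
        have hmaps : ∀ s ∈ S, f s ∈ T.children v := fun s hs => (hkey s hs).1
        have hfib : ∑ c ∈ T.children v, ∑ s ∈ S.filter (fun s => f s = c), w s
            = ∑ s ∈ S, w s := Finset.sum_fiberwise_of_maps_to hmaps w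
        rw [← hfib]
        calc ∑ c ∈ T.children v, ∑ s ∈ S.filter (fun s => f s = c), w s
            ≤ ∑ c ∈ T.children v, w c := by
              apply Finset.sum_le_sum
              intro c hc
              apply ih c _ _ _ _
              · have := T.card_subtree_lt hc
                omega
              · intro s hs
                obtain ⟨hsS, hfs⟩ := Finset.mem_filter.mp hs
                exact hfs ▸ (hkey s hsS).2
              · intro a ha b hb hab
                exact hanti a (Finset.mem_filter.mp ha).1 b (Finset.mem_filter.mp hb).1 hab
          _ ≤ w v := hsup v


open scoped Classical in
/-- Let `T` be a rooted tree with positive weights satisfying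
`w(u) ≥ ∑_{v child of u} w(v)`.  Let `B` be a nonempty set of nodes,
`δ = min_{u ∈ B} w(u)`, and for `u ∈ B` let `L(u)` be the children of `u` of weight
less than `δ`.  Then `∑_{u ∈ B} ∑_{x ∈ L(u)} w(x) ≤ w(root)`. -/
theorem sum_light_children_weights_le_root
    (T : RTree V) (w : V → ℝ) (hpos : ∀ v, 0 < w v)
    (hsup : ∀ u, ∑ v ∈ T.children u, w v ≤ w u)
    (B : Finset V) (hB : B.Nonempty)
    (δ : ℝ) (hδ : δ = B.inf' hB w)
    (L : V → Finset V) (hL : ∀ u, L u = (T.children u).filter fun v => w v < δ) :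
    ∑ u ∈ B, ∑ x ∈ L u, w x ≤ w T.root := by
  have hLmem : ∀ u, ∀ x ∈ L u, T.parent x = u ∧ x ≠ u ∧ w x < δ := by
    intro u x hx
    rw [hL u] at hx
    obtain ⟨hx1, hx2⟩ := Finset.mem_filter.mp hx
    obtain ⟨h1, h2⟩ := RTree.mem_children.mp hx1
    exact ⟨h1, h2, hx2⟩
  have hdisj : ∀ u ∈ B, ∀ u' ∈ B, u ≠ u' → Disjoint (L u) (L u') := by
    intro u _ u' _ huu'
    refine Finset.disjoint_left.mpr fun x hx hx' => ?_
    exact huu' (((hLmem u x hx).1).symm.trans (hLmem u' x hx').1)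
  rw [← Finset.sum_biUnion hdisj]
  set S := B.biUnion L with hSdef
  have hSspec : ∀ x ∈ S, ∃ u ∈ B, x ∈ L u := fun x hx => by
    simpa using Finset.mem_biUnion.mp hx
  apply T.antichain_sum w hpos hsup (T.subtree T.root).card T.root S le_rfl
  · intro s _
    exact RTree.mem_subtree.mpr (T.reaches_root s)
  · intro a ha b hb hab hmem
    obtain ⟨n, hn⟩ := RTree.mem_subtree.mp hmem
    have hn0 : n ≠ 0 := fun h0 => hab (by simpa [h0] using hn)
    obtain ⟨u, huB, haL⟩ := hSspec a ha
    obtain ⟨u', hu'B, hbL⟩ := hSspec b hb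
    have hpa : T.parent a = u := (hLmem u a haL).1
    have hwb : w b < δ := (hLmem u' b hbL).2.2
    have hub : T.parent^[n - 1] u = b := by
      rw [← hpa, ← Function.iterate_succ_apply, Nat.succ_eq_add_one,
        Nat.sub_add_cancel (Nat.one_le_iff_ne_zero.mpr hn0)]
      exact hn
    have h1 : w u ≤ w b := hub ▸ T.w_le_iterate w hpos hsup u (n - 1)
    have h2 : δ ≤ w u := hδ ▸ Finset.inf'_le w huB
    linarith
end

section
/- Let T₁, T₂ be labeled trees with maximum degree d, with n nodes each. In the centroid path decomposition of T₁, for each level i with 0 ≤ i < log₂(2n/d): ∑_{P at level i} √(min(d, |T₁^{r(P)}|)) · Δ_{T₁^{r(P)}, T₂} ≤ √d · Δ_{T₁,T₂}; and for each level log₂(2n/d) + i with i ≥ 0, each centroid path P at that level satisfies |T₁^{r(P)}| ≤ d/2^{i+1}. -/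
open Finset

variable {V : Type*} [Fintype V] [DecidableEq V]

/-- `v` is a light node (the root of a non-root centroid path): it is not the tree root
and it is not the heavy child of its parent. -/
def IsLight (T : RTree V) (hvy : V → V) (v : V) : Prop :=
  v ≠ T.root ∧ v ≠ hvy (T.parent v)

open scoped Classical in
/-- The level of the centroid path rooted at `v`: the number of light nodes on the path
from `v` to the root (inclusive). -/
noncomputable def lightDepth (T : RTree V) (hvy : V → V) (v : V) : ℕ :=
  ((Finset.range (Fintype.card V)).filter fun k => IsLight T hvy (T.parent^[k] v)).card

open scoped Classical in
/-- The roots of the centroid paths: the tree root together with the light nodes. -/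
noncomputable def pathRoots (T : RTree V) (hvy : V → V) : Finset V :=
  Finset.univ.filter fun v => v = T.root ∨ IsLight T hvy v

open scoped Classical in
/-- `Δ_{A,B} = ∑_{u ∈ A} ∑_{v ∈ B} δ(u,v)` where `δ(u,v) = 1` iff `u` and `v` are both
labeled and carry the same label. -/
noncomputable def Delta {V₁ V₂ L : Type*} (lab₁ : V₁ → Option L) (lab₂ : V₂ → Option L)
    (A : Finset V₁) (B : Finset V₂) : ℕ :=
  ∑ u ∈ A, ∑ v ∈ B, if lab₁ u ≠ none ∧ lab₁ u = lab₂ v then 1 else 0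

/-! Each light edge on the way up from `v` at least doubles the subtree size, since a light child
and the heavy child sit disjointly in their parent's subtree and the heavy one is the larger; so a
path root at level `ℓ` has `|T₁^v| · 2^ℓ ≤ n`, which is the size bound after taking logarithms.
Distinct path roots of one level are never ancestor and descendant, because a strict ancestor of a
light node has a smaller level; so their subtrees are disjoint, the `Δ`-terms sum to at most
`Δ_{T₁,T₂}`, and `√(min(d, ·)) ≤ √d` does the rest. -/

namespace RTree

section

variable {V : Type*} (T : RTree V)

theorem iterate_parent_root (k : ℕ) : T.parent^[k] T.root = T.root :=
  Function.iterate_fixed T.parent_root k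

theorem iterate_parent_eq_root_of_le {v : V} {m k : ℕ} (h : T.parent^[m] v = T.root)
    (hmk : m ≤ k) : T.parent^[k] v = T.root := by
  rw [← Nat.sub_add_cancel hmk, Function.iterate_add_apply, h, iterate_parent_root]

theorem eq_root_of_isPeriodicPt {u : V} {m : ℕ} (hm : 0 < m)
    (h : Function.IsPeriodicPt T.parent m u) : u = T.root := by
  obtain ⟨t, ht⟩ := T.reaches_root u
  rw [← (h.mul_const t).eq]
  exact T.iterate_parent_eq_root_of_le ht (Nat.le_mul_of_pos_left t hm)

theorem parent_ne_self {v : V} (hv : v ≠ T.root) : T.parent v ≠ v :=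
  fun h => hv (T.eq_root_of_isPeriodicPt one_pos h)

variable [Fintype V]

/-- Two of the first `card V + 1` ancestors coincide, and a repeated ancestor lies on a cycle,
which can only be the root. -/
theorem iterate_parent_card_eq_root (v : V) : T.parent^[Fintype.card V] v = T.root := by
  obtain ⟨a, b, hab, heq⟩ := Fintype.exists_ne_map_eq_of_card_lt
    (fun k : Fin (Fintype.card V + 1) => T.parent^[k] v) (by simp)
  wlog hlt : a < b generalizing a b
  · exact this b a hab.symm heq.symm (lt_of_le_of_ne (not_lt.1 hlt) hab.symm)
  have hper : Function.IsPeriodicPt T.parent (b - a) (T.parent^[a] v) := by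
    change T.parent^[b - a] (T.parent^[a] v) = T.parent^[a] v
    rw [← Function.iterate_add_apply, Nat.sub_add_cancel hlt.le]
    exact heq.symm
  exact T.iterate_parent_eq_root_of_le (T.eq_root_of_isPeriodicPt (by omega) hper)
    (Nat.lt_succ_iff.1 a.2)

theorem mem_subtree_s18 {u v : V} : v ∈ T.subtree u ↔ ∃ k, T.parent^[k] v = u := by
  simp [RTree.subtree]

theorem mem_children_s18 [DecidableEq V] {u v : V} :
    v ∈ T.children u ↔ T.parent v = u ∧ v ≠ u := by
  simp [RTree.children]

theorem mem_subtree_parent (v : V) : v ∈ T.subtree (T.parent v) := T.mem_subtree_s18.2 ⟨1, rfl⟩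

theorem subtree_subset_of_mem {u w : V} (h : u ∈ T.subtree w) : T.subtree u ⊆ T.subtree w := by
  obtain ⟨m, hm⟩ := T.mem_subtree_s18.1 h
  intro x hx
  obtain ⟨k, hk⟩ := T.mem_subtree_s18.1 hx
  exact T.mem_subtree_s18.2 ⟨m + k, by rw [Function.iterate_add_apply, hk, hm]⟩

theorem eq_of_mem_subtree_of_mem_subtree {u w : V} (huw : u ∈ T.subtree w)
    (hwu : w ∈ T.subtree u) : u = w := by
  obtain ⟨p, hp⟩ := T.mem_subtree_s18.1 huw
  obtain ⟨q, hq⟩ := T.mem_subtree_s18.1 hwu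
  rcases Nat.eq_zero_or_pos (q + p) with hqp | hqp
  · rw [← hp, show p = 0 by omega, Function.iterate_zero_apply]
  have hu : u = T.root := T.eq_root_of_isPeriodicPt hqp <| by
    change T.parent^[q + p] u = u
    rw [Function.iterate_add_apply, hp, hq]
  rw [← hp, hu, iterate_parent_root]

theorem mem_subtree_or_mem_subtree_or_disjoint (u w : V) :
    u ∈ T.subtree w ∨ w ∈ T.subtree u ∨ Disjoint (T.subtree u) (T.subtree w) := by
  by_contra! ⟨hu, hw, hdis⟩
  obtain ⟨x, hxu, hxw⟩ := Finset.not_disjoint_iff.1 hdis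
  obtain ⟨a, rfl⟩ := T.mem_subtree_s18.1 hxu
  obtain ⟨b, rfl⟩ := T.mem_subtree_s18.1 hxw
  have hba : b ≤ a := by
    by_contra! hab
    refine hu (T.mem_subtree_s18.2 ⟨b - a, ?_⟩)
    rw [← Function.iterate_add_apply, Nat.sub_add_cancel hab.le]
  refine hw (T.mem_subtree_s18.2 ⟨a - b, ?_⟩)
  rw [← Function.iterate_add_apply, Nat.sub_add_cancel hba]

theorem disjoint_subtree_of_mem_children [DecidableEq V] {u a b : V} (ha : a ∈ T.children u)
    (hb : b ∈ T.children u) (hab : a ≠ b) : Disjoint (T.subtree a) (T.subtree b) := by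
  /- A strict descendant of a sibling `b` has its parent `u` below `b`, while `b` is below `u`. -/
  have key : ∀ {x y}, x ∈ T.children u → y ∈ T.children u → x ≠ y → x ∉ T.subtree y := by
    intro x y hx hy hxy hmem
    obtain ⟨k, hk⟩ := T.mem_subtree_s18.1 hmem
    obtain ⟨k, rfl⟩ := Nat.exists_eq_succ_of_ne_zero (by rintro rfl; exact hxy hk : k ≠ 0)
    rw [Function.iterate_succ_apply, (T.mem_children_s18.1 hx).1] at hk
    have hyu : y ∈ T.subtree u := by rw [← (T.mem_children_s18.1 hy).1]; exact T.mem_subtree_parent y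
    exact (T.mem_children_s18.1 hy).2 (T.eq_of_mem_subtree_of_mem_subtree (T.mem_subtree_s18.2 ⟨k, hk⟩)
      hyu).symm
  rcases T.mem_subtree_or_mem_subtree_or_disjoint a b with h | h | h
  · exact absurd h (key ha hb hab)
  · exact absurd h (key hb ha hab.symm)
  · exact h

end

end RTree

section CentroidPaths

variable {V : Type*} [Fintype V] (T : RTree V) (hvy : V → V)

theorem lightDepth_root : lightDepth T hvy T.root = 0 := by
  simp [lightDepth, RTree.iterate_parent_root, IsLight]

open scoped Classical in
theorem lightDepth_eq_lightDepth_parent_add (v : V) :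
    lightDepth T hvy v = lightDepth T hvy (T.parent v) + if IsLight T hvy v then 1 else 0 := by
  have hlast : ¬IsLight T hvy (T.parent^[Fintype.card V] v) := by
    rw [T.iterate_parent_card_eq_root]; exact fun h => h.1 rfl
  have h := (Finset.sum_range_succ' (fun k => if IsLight T hvy (T.parent^[k] v) then 1 else 0)
    (Fintype.card V)).symm.trans
    (Finset.sum_range_succ (fun k => if IsLight T hvy (T.parent^[k] v) then 1 else 0) _)
  simp only [if_neg hlast, add_zero, Function.iterate_succ_apply,
    Function.iterate_zero_apply] at h
  simp only [lightDepth, Finset.card_filter]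
  exact h.symm

theorem lightDepth_parent_le (v : V) : lightDepth T hvy (T.parent v) ≤ lightDepth T hvy v := by
  rw [lightDepth_eq_lightDepth_parent_add T hvy v]
  exact Nat.le_add_right _ _

theorem lightDepth_iterate_parent_le (v : V) (k : ℕ) :
    lightDepth T hvy (T.parent^[k] v) ≤ lightDepth T hvy v := by
  induction k with
  | zero => rfl
  | succ k ih => exact (Function.iterate_succ_apply' T.parent k v ▸
      lightDepth_parent_le T hvy _).trans ih

theorem lightDepth_iterate_parent_lt {v : V} (hv : IsLight T hvy v) {k : ℕ} (hk : k ≠ 0) :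
    lightDepth T hvy (T.parent^[k] v) < lightDepth T hvy v := by
  obtain ⟨k, rfl⟩ := Nat.exists_eq_succ_of_ne_zero hk
  rw [Function.iterate_succ_apply]
  calc lightDepth T hvy (T.parent^[k] (T.parent v)) ≤ lightDepth T hvy (T.parent v) :=
        lightDepth_iterate_parent_le T hvy _ k
    _ < lightDepth T hvy v := by
        rw [lightDepth_eq_lightDepth_parent_add T hvy v, if_pos hv]; exact Nat.lt_succ_self _

theorem mem_pathRoots [DecidableEq V] {v : V} :
    v ∈ pathRoots T hvy ↔ v = T.root ∨ IsLight T hvy v := by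
  simp [pathRoots]

theorem disjoint_subtree_of_lightDepth_eq [DecidableEq V] {v w : V} (hv : v ∈ pathRoots T hvy)
    (hw : w ∈ pathRoots T hvy) (hvw : v ≠ w)
    (hdepth : lightDepth T hvy v = lightDepth T hvy w) :
    Disjoint (T.subtree v) (T.subtree w) := by
  have key : ∀ {x y}, x ∈ pathRoots T hvy → x ≠ y →
      lightDepth T hvy x = lightDepth T hvy y → x ∉ T.subtree y := by
    intro x y hx hxy hxy_depth hmem
    obtain ⟨k, rfl⟩ := T.mem_subtree_s18.1 hmem
    have hk : k ≠ 0 := by rintro rfl; exact hxy rfl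
    rcases (mem_pathRoots T hvy).1 hx with rfl | hlight
    · exact hxy (T.iterate_parent_root k).symm
    · exact (lightDepth_iterate_parent_lt T hvy hlight hk).ne' hxy_depth
  rcases T.mem_subtree_or_mem_subtree_or_disjoint v w with h | h | h
  · exact absurd h (key hv hvw hdepth)
  · exact absurd h (key hw hvw.symm hdepth.symm)
  · exact h

end CentroidPaths

section HeavyChildren

variable {V : Type*} [Fintype V] [DecidableEq V] (T : RTree V) {hvy : V → V}

/-- A light node and the heavy child of its parent have disjoint subtrees inside the parent's,
and the heavy one is at least as large. -/
theorem two_mul_card_subtree_le_of_isLight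
    (hhvy_mem : ∀ u, (T.children u).Nonempty → hvy u ∈ T.children u)
    (hhvy_max : ∀ u, ∀ v ∈ T.children u, (T.subtree v).card ≤ (T.subtree (hvy u)).card)
    {v : V} (hv : IsLight T hvy v) :
    2 * (T.subtree v).card ≤ (T.subtree (T.parent v)).card := by
  have hv_child : v ∈ T.children (T.parent v) :=
    T.mem_children_s18.2 ⟨rfl, (T.parent_ne_self hv.1).symm⟩
  have hheavy := hhvy_mem _ ⟨v, hv_child⟩
  have hsub : T.subtree v ∪ T.subtree (hvy (T.parent v)) ⊆ T.subtree (T.parent v) := by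
    refine Finset.union_subset (T.subtree_subset_of_mem (T.mem_subtree_parent v))
      (T.subtree_subset_of_mem ?_)
    rw [← congrArg T.subtree (T.mem_children_s18.1 hheavy).1]
    exact T.mem_subtree_parent _
  have hcard := Finset.card_le_card hsub
  rw [Finset.card_union_of_disjoint (T.disjoint_subtree_of_mem_children hv_child hheavy hv.2)]
    at hcard
  linarith [hhvy_max _ v hv_child]

theorem card_subtree_mul_two_pow_lightDepth_le
    (hhvy_mem : ∀ u, (T.children u).Nonempty → hvy u ∈ T.children u)
    (hhvy_max : ∀ u, ∀ v ∈ T.children u, (T.subtree v).card ≤ (T.subtree (hvy u)).card)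
    (v : V) : (T.subtree v).card * 2 ^ lightDepth T hvy v ≤ Fintype.card V := by
  obtain ⟨m, hm⟩ := T.reaches_root v
  induction m generalizing v with
  | zero =>
    obtain rfl : v = T.root := hm
    rw [lightDepth_root, pow_zero, mul_one]
    exact Finset.card_le_univ _
  | succ m ih =>
    by_cases hv : v = T.root
    · subst hv; exact ih _ (T.iterate_parent_root m)
    have ih := ih (T.parent v) hm
    classical
    rw [lightDepth_eq_lightDepth_parent_add T hvy v, pow_add]
    split_ifs with hl
    · have := two_mul_card_subtree_le_of_isLight T hhvy_mem hhvy_max hl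
      calc (T.subtree v).card * (2 ^ lightDepth T hvy (T.parent v) * 2 ^ 1)
          = 2 * (T.subtree v).card * 2 ^ lightDepth T hvy (T.parent v) := by ring
        _ ≤ _ := Nat.mul_le_mul_right _ this
        _ ≤ _ := ih
    · rw [pow_zero, mul_one]
      exact (Nat.mul_le_mul_right _
        (Finset.card_le_card (T.subtree_subset_of_mem (T.mem_subtree_parent v)))).trans ih

end HeavyChildren

theorem sum_Delta_le_of_pairwiseDisjoint {ι V₁ V₂ L : Type*} [Fintype V₁]
    (lab₁ : V₁ → Option L) (lab₂ : V₂ → Option L) {S : Finset ι} {A : ι → Finset V₁}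
    (hA : (S : Set ι).PairwiseDisjoint A) (B : Finset V₂) :
    ∑ i ∈ S, Delta lab₁ lab₂ (A i) B ≤ Delta lab₁ lab₂ Finset.univ B := by
  classical
  unfold Delta
  rw [← Finset.sum_biUnion hA]
  exact Finset.sum_le_sum_of_subset (Finset.subset_univ _)

theorem le_div_two_pow_of_logb_add_le {c n d : ℝ} {i ℓ : ℕ} (hn : 0 < n) (hd : 0 < d)
    (hc : c * 2 ^ ℓ ≤ n) (hℓ : Real.logb 2 (2 * n / d) + i ≤ ℓ) : c ≤ d / 2 ^ (i + 1) := by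
  have h : 2 * n / d ≤ 2 ^ ℓ / 2 ^ i := by
    rw [← Real.rpow_natCast, ← Real.rpow_natCast, ← Real.rpow_sub two_pos,
      ← Real.logb_le_iff_le_rpow one_lt_two (by positivity)]
    linarith
  rw [div_le_div_iff₀ hd (by positivity)] at h
  rw [le_div_iff₀ (by positivity)]
  refine le_of_mul_le_mul_right ?_ (by positivity : (0 : ℝ) < 2 ^ ℓ)
  calc c * 2 ^ (i + 1) * 2 ^ ℓ = c * 2 ^ ℓ * (2 * 2 ^ i) := by ring
    _ ≤ n * (2 * 2 ^ i) := by gcongr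
    _ ≤ d * 2 ^ ℓ := by linarith

theorem sum_sqrt_min_card_mul_Delta_le {ι V₁ V₂ L : Type*} [Fintype V₁]
    (lab₁ : V₁ → Option L) (lab₂ : V₂ → Option L) {S : Finset ι} {A : ι → Finset V₁}
    (hA : (S : Set ι).PairwiseDisjoint A) (B : Finset V₂) (d : ℕ) :
    ∑ i ∈ S, Real.sqrt (min d (A i).card) * (Delta lab₁ lab₂ (A i) B : ℝ) ≤
      Real.sqrt d * (Delta lab₁ lab₂ Finset.univ B : ℝ) :=
  calc ∑ i ∈ S, Real.sqrt (min d (A i).card) * (Delta lab₁ lab₂ (A i) B : ℝ)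
      ≤ ∑ i ∈ S, Real.sqrt d * (Delta lab₁ lab₂ (A i) B : ℝ) :=
        Finset.sum_le_sum fun _ _ => mul_le_mul_of_nonneg_right
          (Real.sqrt_le_sqrt (by exact_mod_cast min_le_left _ _)) (Nat.cast_nonneg _)
    _ = Real.sqrt d * ∑ i ∈ S, (Delta lab₁ lab₂ (A i) B : ℝ) := (Finset.mul_sum _ _ _).symm
    _ ≤ Real.sqrt d * (Delta lab₁ lab₂ Finset.univ B : ℝ) :=
        mul_le_mul_of_nonneg_left
          (by exact_mod_cast sum_Delta_le_of_pairwiseDisjoint lab₁ lab₂ hA B) (Real.sqrt_nonneg _)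

open scoped Classical in
theorem centroid_level_sums_and_sizes_general
    {V₂ L : Type*} [Fintype V₂]
    (T₁ : RTree V) (lab₁ : V → Option L) (lab₂ : V₂ → Option L)
    (n d : ℕ) (hn : n = Fintype.card V) (hd : 2 ≤ d)
    (hvy : V → V)
    (hhvy_mem : ∀ u, (T₁.children u).Nonempty → hvy u ∈ T₁.children u)
    (hhvy_max : ∀ u, ∀ v ∈ T₁.children u, (T₁.subtree v).card ≤ (T₁.subtree (hvy u)).card) :
    (∀ i : ℕ, (i : ℝ) < Real.logb 2 (2 * n / d) →
      ∑ v ∈ (pathRoots T₁ hvy).filter (fun v => lightDepth T₁ hvy v = i),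
          Real.sqrt (min d (T₁.subtree v).card) *
            (Delta lab₁ lab₂ (T₁.subtree v) Finset.univ : ℝ) ≤
        Real.sqrt d * (Delta lab₁ lab₂ Finset.univ Finset.univ : ℝ)) ∧
    (∀ i : ℕ, ∀ v ∈ pathRoots T₁ hvy,
      Real.logb 2 (2 * n / d) + i ≤ (lightDepth T₁ hvy v : ℝ) →
      ((T₁.subtree v).card : ℝ) ≤ (d : ℝ) / 2 ^ (i + 1)) := by
  refine ⟨fun i _ => sum_sqrt_min_card_mul_Delta_le lab₁ lab₂ ?_ _ d, fun i v _ hlevel => ?_⟩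
  · intro v hv w hw hvw
    rw [Finset.mem_coe, Finset.mem_filter] at hv hw
    exact disjoint_subtree_of_lightDepth_eq T₁ hvy hv.1 hw.1 hvw (hv.2.trans hw.2.symm)
  · have hcard := card_subtree_mul_two_pow_lightDepth_le T₁ hhvy_mem hhvy_max v
    subst hn
    exact le_div_two_pow_of_logb_add_le (by exact_mod_cast Fintype.card_pos_iff.2 ⟨T₁.root⟩)
      (by exact_mod_cast (by omega : 0 < d)) (by exact_mod_cast hcard) hlevel

open scoped Classical in
/-- Let `T₁, T₂` be labeled trees with maximum degree `d ≥ 2` and `n` nodes each.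
In the centroid path decomposition of `T₁`:
(1) for each level `i` with `i < log₂(2n/d)`,
`∑_{P at level i} √(min(d,|T₁^{r(P)}|)) · Δ_{T₁^{r(P)},T₂} ≤ √d · Δ_{T₁,T₂}`;
(2) each centroid path `P` at a level `≥ log₂(2n/d) + i` satisfies
`|T₁^{r(P)}| ≤ d/2^{i+1}`. -/
theorem centroid_level_sums_and_sizes
    {V₂ L : Type*} [Fintype V₂] [DecidableEq V₂]
    (T₁ : RTree V) (lab₁ : V → Option L) (lab₂ : V₂ → Option L)
    (n d : ℕ) (hn : n = Fintype.card V) (hd : 2 ≤ d)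
    (hdeg₁ : ∀ u, (T₁.children u).card ≤ d)
    (hvy : V → V)
    (hhvy_mem : ∀ u, (T₁.children u).Nonempty → hvy u ∈ T₁.children u)
    (hhvy_max : ∀ u, ∀ v ∈ T₁.children u, (T₁.subtree v).card ≤ (T₁.subtree (hvy u)).card) :
    (∀ i : ℕ, (i : ℝ) < Real.logb 2 (2 * n / d) →
      ∑ v ∈ (pathRoots T₁ hvy).filter (fun v => lightDepth T₁ hvy v = i),
          Real.sqrt (min d (T₁.subtree v).card) *
            (Delta lab₁ lab₂ (T₁.subtree v) Finset.univ : ℝ) ≤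
        Real.sqrt d * (Delta lab₁ lab₂ Finset.univ Finset.univ : ℝ)) ∧
    (∀ i : ℕ, ∀ v ∈ pathRoots T₁ hvy,
      Real.logb 2 (2 * n / d) + i ≤ (lightDepth T₁ hvy v : ℝ) →
      ((T₁.subtree v).card : ℝ) ≤ (d : ℝ) / 2 ^ (i + 1)) :=
  centroid_level_sums_and_sizes_general T₁ lab₁ lab₂ n d hn hd hvy hhvy_mem hhvy_max
end
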